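/- arXiv:math/0508241 — 2 statements merged into one kernel-verified Lean document; each statement's English description precedes it below -/
import Mathlib

section
/- Let P(t) be a polynomial in n variables and let 0 < D₀ < D. Then for all x, ξ ∈ ℝⁿ, P(∂_ξ) e^{-|ξ - x|²/D} = c₁ · (e^{-|·|²/(D - D₀)} ∗ P(∂_·) e^{-|· - x|²/D₀})(ξ), where c₁ = (D/(π D₀ (D - D₀)))^{n/2} and ∗ denotes convolution in ξ. -/
open Real MeasureTheory
open scoped BigOperators

/-- Partial derivative in direction `i`. -/
noncomputable def pd {n : ℕ} (i : Fin n) (f : EuclideanSpace ℝ (Fin n) → ℝ) :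
    EuclideanSpace ℝ (Fin n) → ℝ :=
  fun x => fderiv ℝ f x (EuclideanSpace.single i 1)

/-- Multi-index partial derivative `∂^α`. -/
noncomputable def mderiv {n : ℕ} (α : Fin n → ℕ) (f : EuclideanSpace ℝ (Fin n) → ℝ) :
    EuclideanSpace ℝ (Fin n) → ℝ :=
  (List.finRange n).foldr (fun i g => (pd i)^[α i] g) f

/-- The constant-coefficient differential operator `P(∂)` applied to `f`. -/
noncomputable def applyDiff {n : ℕ} (P : MvPolynomial (Fin n) ℝ)
    (f : EuclideanSpace ℝ (Fin n) → ℝ) : EuclideanSpace ℝ (Fin n) → ℝ :=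
  fun x => ∑ α ∈ P.support, P.coeff α * mderiv (fun i => α i) f x

open Filter Topology
open scoped ContDiff

noncomputable def g1 (c : ℝ) : ℝ → ℝ := fun y => Real.exp (-y ^ 2 / c)

lemma g1_nonneg (c y : ℝ) : 0 ≤ g1 c y := (Real.exp_pos _).le

lemma g1_even (c a b : ℝ) : g1 c (a - b) = g1 c (b - a) := by
  simp only [g1]; congr 1; ring

lemma hasDerivAt_g1 (c y : ℝ) : HasDerivAt (g1 c) (-2 * y / c * g1 c y) y := by
  have h : HasDerivAt (fun y : ℝ => -y ^ 2 / c) (-2 * y / c) y := by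
    have := ((hasDerivAt_pow 2 y).neg).div_const c
    simpa [pow_one] using this.congr_deriv (by ring)
  unfold g1
  simpa [g1, mul_comm] using h.exp

lemma contDiff_g1 (c : ℝ) : ContDiff ℝ (⊤ : ℕ∞) (g1 c) :=
  Real.contDiff_exp.comp (((contDiff_id.pow 2).neg).div_const c)

lemma deriv_poly_gauss (c : ℝ) (p : Polynomial ℝ) (y : ℝ) :
    HasDerivAt (fun y => p.eval y * g1 c y)
      ((p.derivative + Polynomial.C (-2/c) * (Polynomial.X * p)).eval y * g1 c y) y := by
  have h : HasDerivAt (fun y => p.eval y * g1 c y) _ y := (p.hasDerivAt y).mul (hasDerivAt_g1 c y)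
  convert h using 1
  simp [Polynomial.eval_mul, Polynomial.eval_add]
  ring

lemma hermite (c : ℝ) (k : ℕ) :
    ∃ p : Polynomial ℝ, deriv^[k] (g1 c) = fun y => p.eval y * g1 c y := by
  induction k with
  | zero => exact ⟨1, by simp⟩
  | succ k ih =>
    obtain ⟨p, hp⟩ := ih
    refine ⟨p.derivative + Polynomial.C (-2/c) * (Polynomial.X * p), ?_⟩
    rw [Function.iterate_succ_apply', hp]
    funext y
    exact (deriv_poly_gauss c p y).deriv

lemma hasDerivAt_iter_g1 (c : ℝ) (k : ℕ) (y : ℝ) :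
    HasDerivAt (deriv^[k] (g1 c)) (deriv^[k+1] (g1 c) y) y := by
  obtain ⟨p, hp⟩ := hermite c k
  have h : HasDerivAt (deriv^[k] (g1 c))
      ((p.derivative + Polynomial.C (-2/c) * (Polynomial.X * p)).eval y * g1 c y) y := by
    rw [hp]; exact deriv_poly_gauss c p y
  rw [Function.iterate_succ_apply']
  rwa [h.deriv]

lemma continuous_iter_g1 (c : ℝ) (k : ℕ) : Continuous (deriv^[k] (g1 c)) := by
  obtain ⟨p, hp⟩ := hermite c k
  rw [hp]
  exact p.continuous.mul (contDiff_g1 c).continuous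

lemma tendsto_poly_gauss_atTop (c : ℝ) (hc : 0 < c) (p : Polynomial ℝ) :
    Tendsto (fun y => |p.eval y| * g1 c y) atTop (𝓝 0) := by
  have hbd : ∀ y : ℝ, |p.eval y| * g1 c y ≤ Real.exp (c/4) * |p.eval y / Real.exp y| := by
    intro y
    have h1 : g1 c y ≤ Real.exp (c/4) * Real.exp (-y) := by
      rw [g1, ← Real.exp_add]
      apply Real.exp_le_exp.2
      have : c/4 + -y - (-y^2/c) = (y - c/2)^2 / c := by field_simp; ring
      nlinarith [div_nonneg (sq_nonneg (y - c/2)) hc.le]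
    calc |p.eval y| * g1 c y ≤ |p.eval y| * (Real.exp (c/4) * Real.exp (-y)) := by
          exact mul_le_mul_of_nonneg_left h1 (abs_nonneg _)
      _ = Real.exp (c/4) * |p.eval y / Real.exp y| := by
          rw [abs_div, abs_of_pos (Real.exp_pos y), Real.exp_neg, div_eq_mul_inv]; ring
  have h2 : Tendsto (fun y => Real.exp (c/4) * |p.eval y / Real.exp y|) atTop (𝓝 0) := by
    have := (p.tendsto_div_exp_atTop).abs
    simpa using this.const_mul (Real.exp (c/4))
  refine squeeze_zero (fun y => mul_nonneg (abs_nonneg _) (g1_nonneg c y)) hbd h2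

lemma tendsto_poly_gauss_atBot (c : ℝ) (hc : 0 < c) (p : Polynomial ℝ) :
    Tendsto (fun y => |p.eval y| * g1 c y) atBot (𝓝 0) := by
  have h := tendsto_poly_gauss_atTop c hc (p.comp (-Polynomial.X))
  have h2 := h.comp tendsto_neg_atBot_atTop
  refine h2.congr (fun y => ?_)
  simp only [Function.comp_apply, Polynomial.eval_comp, Polynomial.eval_neg, Polynomial.eval_X]
  rw [neg_neg]
  congr 1
  simp only [g1]; congr 2; ring

lemma bounded_poly_gauss (c : ℝ) (hc : 0 < c) (p : Polynomial ℝ) :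
    ∃ M : ℝ, ∀ y, |p.eval y * g1 c y| ≤ M := by
  have ha : ∀ᶠ y in atTop, |p.eval y| * g1 c y < 1 :=
    (tendsto_poly_gauss_atTop c hc p).eventually_lt_const one_pos
  have hb : ∀ᶠ y in atBot, |p.eval y| * g1 c y < 1 :=
    (tendsto_poly_gauss_atBot c hc p).eventually_lt_const one_pos
  obtain ⟨a, ha⟩ := ha.exists_forall_of_atTop
  obtain ⟨b, hb⟩ := hb.exists_forall_of_atBot
  have hcont : ContinuousOn (fun y => |p.eval y| * g1 c y) (Set.Icc b a) :=
    (p.continuous.abs.mul (contDiff_g1 c).continuous).continuousOn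
  obtain ⟨C, hC⟩ := (isCompact_Icc (a := b) (b := a)).exists_bound_of_continuousOn hcont
  refine ⟨max C 1, fun y => ?_⟩
  rw [abs_mul, abs_of_nonneg (g1_nonneg c y)]
  rcases le_total y a with h1 | h1
  · rcases le_total b y with h2 | h2
    · have := hC y ⟨h2, h1⟩
      rw [Real.norm_eq_abs, abs_of_nonneg (mul_nonneg (abs_nonneg _) (g1_nonneg c y))] at this
      exact this.trans (le_max_left C 1)
    · exact le_trans (hb y h2).le (le_max_right C 1)
  · exact le_trans (ha y h1).le (le_max_right C 1)

lemma bounded_iter_g1 (c : ℝ) (hc : 0 < c) (k : ℕ) :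
    ∃ M : ℝ, ∀ y, |deriv^[k] (g1 c) y| ≤ M := by
  obtain ⟨p, hp⟩ := hermite c k
  obtain ⟨M, hM⟩ := bounded_poly_gauss c hc p
  exact ⟨M, fun y => by rw [hp]; exact hM y⟩

lemma integrable_g1 {c : ℝ} (hc : 0 < c) : Integrable (g1 c) := by
  have h := integrable_exp_neg_mul_sq (show (0:ℝ) < 1/c by positivity)
  exact h.congr (Filter.Eventually.of_forall fun y => by
    show Real.exp (-(1/c) * y ^ 2) = g1 c y
    rw [g1]; congr 1; ring)

lemma conv_gauss (A B : ℝ) (hA : 0 < A) (hB : 0 < B) (y : ℝ) :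
    ∫ t, g1 A t * g1 B (y - t) = Real.sqrt (π * A * B / (A + B)) * g1 (A + B) y := by
  have hAB : (0:ℝ) < A + B := by linarith
  have hptw : ∀ t, g1 A t * g1 B (y - t)
      = g1 (A + B) y * Real.exp (-((A+B)/(A*B)) * (t - A*y/(A+B)) ^ 2) := by
    intro t
    simp only [g1, ← Real.exp_add]
    congr 1
    field_simp
    ring
  simp_rw [hptw]
  rw [MeasureTheory.integral_const_mul]
  have hsub : ∫ t, Real.exp (-((A+B)/(A*B)) * (t - A*y/(A+B)) ^ 2)
      = ∫ t, Real.exp (-((A+B)/(A*B)) * t ^ 2) :=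
    integral_sub_right_eq_self (fun t => Real.exp (-((A+B)/(A*B)) * t ^ 2)) (A*y/(A+B))
  rw [hsub, integral_gaussian]
  rw [mul_comm]
  congr 1
  rw [show π / ((A+B)/(A*B)) = π * A * B / (A + B) by field_simp]

lemma key1 (A B : ℝ) (hA : 0 < A) (hB : 0 < B) (k : ℕ) (y : ℝ) :
    deriv^[k] (g1 (A + B)) y
      = Real.sqrt ((A + B) / (π * A * B)) * ∫ t, g1 A t * deriv^[k] (g1 B) (y - t) := by
  have hAB : (0:ℝ) < A + B := by linarith
  induction k generalizing y with
  | zero =>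
    simp only [Function.iterate_zero, id_eq]
    rw [conv_gauss A B hA hB y, ← mul_assoc, ← Real.sqrt_mul (by positivity)]
    rw [show (A + B) / (π * A * B) * (π * A * B / (A + B)) = 1 by
      field_simp]
    rw [Real.sqrt_one, one_mul]
  | succ k IH =>
    obtain ⟨M, hM⟩ := bounded_iter_g1 B hB (k+1)
    obtain ⟨MK, hMK⟩ := bounded_iter_g1 B hB k
    have hMnn : 0 ≤ M := (abs_nonneg _).trans (hM 0)
    have hcontk := continuous_iter_g1 B k
    have hcontk1 := continuous_iter_g1 B (k+1)
    have hcontA := (contDiff_g1 A).continuous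
    have hintA := integrable_g1 hA
    have hD : HasDerivAt (fun y => ∫ t, g1 A t * deriv^[k] (g1 B) (y - t))
        (∫ t, g1 A t * deriv^[k+1] (g1 B) (y - t)) y := by
      refine (hasDerivAt_integral_of_dominated_loc_of_deriv_le
        (F := fun y t => g1 A t * deriv^[k] (g1 B) (y - t))
        (F' := fun y t => g1 A t * deriv^[k+1] (g1 B) (y - t))
        (bound := fun t => g1 A t * M) (Metric.ball_mem_nhds y one_pos) ?_ ?_ ?_ ?_ ?_ ?_).2
      · exact Filter.Eventually.of_forall fun z =>
          (hcontA.mul (hcontk.comp (continuous_const.sub continuous_id))).aestronglyMeasurable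
      · have : Integrable (fun t => deriv^[k] (g1 B) (y - t) * g1 A t) :=
          hintA.bdd_mul (c := MK)
            ((hcontk.comp (continuous_const.sub continuous_id)).aestronglyMeasurable)
            (Filter.Eventually.of_forall fun t => by
              simpa [Real.norm_eq_abs] using hMK (y - t))
        exact this.congr (Filter.Eventually.of_forall fun t => mul_comm _ _)
      · exact (hcontA.mul (hcontk1.comp (continuous_const.sub continuous_id))).aestronglyMeasurable
      · refine Filter.Eventually.of_forall fun t z _ => ?_
        rw [Real.norm_eq_abs, abs_mul, abs_of_nonneg (g1_nonneg A t)]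
        exact mul_le_mul_of_nonneg_left (hM _) (g1_nonneg A t)
      · exact hintA.mul_const M
      · refine Filter.Eventually.of_forall fun t z _ => ?_
        have h1 : HasDerivAt (fun z => deriv^[k] (g1 B) (z - t)) (deriv^[k+1] (g1 B) (z - t)) z := by
          have := (hasDerivAt_iter_g1 B k (z - t)).comp z ((hasDerivAt_id z).sub_const t)
          simpa [Function.comp_def] using this
        exact h1.const_mul (g1 A t)
    have hfun : deriv^[k] (g1 (A + B))
        = fun y => Real.sqrt ((A + B) / (π * A * B)) * ∫ t, g1 A t * deriv^[k] (g1 B) (y - t) :=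
      funext fun z => IH z
    rw [Function.iterate_succ_apply', hfun]
    rw [deriv_const_mul _ hD.differentiableAt, hD.deriv]


open scoped ContDiff

noncomputable def pr {n : ℕ} (u : Fin n → ℝ → ℝ) : EuclideanSpace ℝ (Fin n) → ℝ :=
  fun t => ∏ j, u j (t j)

lemma pd_pr {n : ℕ} (i : Fin n) (u : Fin n → ℝ → ℝ) (hu : ∀ j, Differentiable ℝ (u j)) :
    pd i (pr u) = pr (Function.update u i (deriv (u i))) := by
  classical
  funext t
  have hj : ∀ j ∈ Finset.univ, HasFDerivAt (fun s : EuclideanSpace ℝ (Fin n) => u j (s j))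
      ((deriv (u j) (t j)) • (EuclideanSpace.proj j : EuclideanSpace ℝ (Fin n) →L[ℝ] ℝ)) t := by
    intro j _
    have h1 : HasFDerivAt (fun s : EuclideanSpace ℝ (Fin n) => s j)
        (EuclideanSpace.proj j : EuclideanSpace ℝ (Fin n) →L[ℝ] ℝ) t :=
      (EuclideanSpace.proj (𝕜 := ℝ) j).hasFDerivAt
    exact ((hu j (t j)).hasDerivAt).comp_hasFDerivAt t h1
  have H := HasFDerivAt.finset_prod hj
  have H' : HasFDerivAt (pr u)
      (∑ j, (∏ k ∈ Finset.univ.erase j, u k (t k)) •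
        ((deriv (u j) (t j)) • (EuclideanSpace.proj j : EuclideanSpace ℝ (Fin n) →L[ℝ] ℝ))) t := H
  have hpd : pd i (pr u) t
      = (∑ j, (∏ k ∈ Finset.univ.erase j, u k (t k)) •
          ((deriv (u j) (t j)) • (EuclideanSpace.proj j : EuclideanSpace ℝ (Fin n) →L[ℝ] ℝ)))
            (EuclideanSpace.single i 1) := by
    rw [pd, H'.fderiv]
  rw [hpd, ContinuousLinearMap.sum_apply]
  rw [Finset.sum_eq_single i ?h0 ?h1]
  case h0 =>
    intro j _ hji
    simp [PiLp.proj_apply, EuclideanSpace.single_apply, hji]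
  case h1 => simp
  simp [ContinuousLinearMap.smul_apply, PiLp.proj_apply,
    EuclideanSpace.single_apply, smul_eq_mul]
  rw [pr, ← Finset.mul_prod_erase _ _ (Finset.mem_univ i), Function.update_self]
  rw [Finset.prod_congr rfl (fun k hk =>
    show Function.update u i (deriv (u i)) k (t k) = u k (t k) by
      rw [Function.update_of_ne (Finset.mem_erase.1 hk).1])]
  ring

lemma pd_iter {n : ℕ} (i : Fin n) (m : ℕ) :
    ∀ (u : Fin n → ℝ → ℝ), (∀ j, ContDiff ℝ ∞ (u j)) →
      (pd i)^[m] (pr u) = pr (Function.update u i (deriv^[m] (u i))) := by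
  induction m with
  | zero => intro u hu; simp [Function.update_eq_self]
  | succ m ih =>
    intro u hu
    rw [Function.iterate_succ_apply', ih u hu, pd_pr i _ (fun j => by
      rcases eq_or_ne j i with rfl | hne
      · rw [Function.update_self]; exact ((hu j).iterate_deriv m).differentiable (by norm_num)
      · rw [Function.update_of_ne hne]; exact (hu j).differentiable (by norm_num))]
    rw [Function.update_self, Function.update_idem,
      show deriv (deriv^[m] (u i)) = deriv^[m+1] (u i) from
        (Function.iterate_succ_apply' deriv m (u i)).symm]

lemma foldr_pd {n : ℕ} (αf : Fin n → ℕ) :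
    ∀ (l : List (Fin n)) (u : Fin n → ℝ → ℝ), l.Nodup → (∀ j, ContDiff ℝ ∞ (u j)) →
      l.foldr (fun i g => (pd i)^[αf i] g) (pr u)
        = pr (fun j => if j ∈ l then deriv^[αf j] (u j) else u j) := by
  intro l
  induction l with
  | nil => intro u _ _; simp
  | cons i l ih =>
    intro u hnd hu
    rw [List.foldr_cons, ih u (List.nodup_cons.1 hnd).2 hu]
    have hw : ∀ j, ContDiff ℝ ∞ (if j ∈ l then deriv^[αf j] (u j) else u j) := by
      intro j
      by_cases h : j ∈ l
      · simpa [h] using (hu j).iterate_deriv (αf j)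
      · simpa [h] using hu j
    have hnotmem : i ∉ l := (List.nodup_cons.1 hnd).1
    rw [pd_iter i (αf i) _ hw]
    refine congrArg pr (funext fun j => ?_)
    rcases eq_or_ne j i with rfl | hne
    · rw [Function.update_self]
      simp [hnotmem, List.mem_cons]
    · rw [Function.update_of_ne hne]
      simp [List.mem_cons, hne]

lemma mderiv_pr {n : ℕ} (αf : Fin n → ℕ) (u : Fin n → ℝ → ℝ) (hu : ∀ j, ContDiff ℝ ∞ (u j)) :
    (List.finRange n).foldr (fun i g => (pd i)^[αf i] g) (pr u)
      = pr (fun j => deriv^[αf j] (u j)) := by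
  rw [foldr_pd αf (List.finRange n) u (List.nodup_finRange n) hu]
  exact congrArg pr (funext fun j => by simp [List.mem_finRange])

lemma iter_shift (c a : ℝ) (m : ℕ) :
    deriv^[m] (fun s => g1 c (s - a)) = fun s => deriv^[m] (g1 c) (s - a) := by
  induction m with
  | zero => simp
  | succ m ih =>
    rw [Function.iterate_succ_apply', Function.iterate_succ_apply', ih]
    funext s
    exact deriv_comp_sub_const _ _ _

lemma norm_sq_eq {n : ℕ} (v : EuclideanSpace ℝ (Fin n)) : ‖v‖ ^ 2 = ∑ j, (v j) ^ 2 := by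
  rw [EuclideanSpace.norm_eq, Real.sq_sqrt (Finset.sum_nonneg fun j _ => by positivity)]
  simp [Real.norm_eq_abs, sq_abs]

lemma gauss_prod {n : ℕ} (c : ℝ) (v : EuclideanSpace ℝ (Fin n)) :
    Real.exp (-‖v‖ ^ 2 / c) = ∏ j, g1 c (v j) := by
  rw [norm_sq_eq]
  simp only [g1]
  rw [← Real.exp_sum]
  congr 1
  rw [neg_div, Finset.sum_div, ← Finset.sum_neg_distrib]
  exact Finset.sum_congr rfl fun j _ => (neg_div c (v j ^ 2)).symm ▸ rfl

lemma integral_euclid_prod {n : ℕ} (F : Fin n → ℝ → ℝ) :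
    ∫ t : EuclideanSpace ℝ (Fin n), ∏ j, F j (t j) = ∏ j, ∫ s, F j s := by
  have h := (EuclideanSpace.volume_preserving_symm_measurableEquiv_toLp (Fin n)).symm
  rw [← h.integral_comp (MeasurableEquiv.measurableEmbedding _)]
  exact MeasureTheory.integral_fintype_prod_eq_prod F

lemma integrable_euclid_prod {n : ℕ} (F : Fin n → ℝ → ℝ) (hF : ∀ j, Integrable (F j)) :
    Integrable (fun t : EuclideanSpace ℝ (Fin n) => ∏ j, F j (t j)) := by
  have h := EuclideanSpace.volume_preserving_symm_measurableEquiv_toLp (Fin n)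
  rw [← MeasurePreserving.integrable_comp_emb h.symm (MeasurableEquiv.measurableEmbedding _)]
  exact Integrable.fintype_prod hF

lemma applyDiff_gauss_eval {n : ℕ} (P : MvPolynomial (Fin n) ℝ) (c : ℝ)
    (x ξ : EuclideanSpace ℝ (Fin n)) :
    applyDiff P (fun t => Real.exp (-‖t - x‖ ^ 2 / c)) ξ
      = ∑ α ∈ P.support, P.coeff α * ∏ j, deriv^[α j] (g1 c) (ξ j - x j) := by
  have hfD : (fun t : EuclideanSpace ℝ (Fin n) => Real.exp (-‖t - x‖ ^ 2 / c))
      = pr (fun j s => g1 c (s - x j)) := by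
    funext t
    rw [gauss_prod c (t - x), pr]
    exact Finset.prod_congr rfl fun j _ => by simp [g1]
  have hu : ∀ j, ContDiff ℝ ∞ (fun s => g1 c (s - x j)) :=
    fun j => ((contDiff_g1 c).of_le (mod_cast le_top)).comp (contDiff_id.sub contDiff_const)
  refine Finset.sum_congr rfl fun α _ => ?_
  congr 1
  rw [hfD, mderiv, mderiv_pr _ _ hu, pr]
  exact Finset.prod_congr rfl fun j _ => by rw [iter_shift]

/-- Gaussian factorization of the operator `P(∂)` applied to a Gaussian:
`P(∂_ξ) e^{-|ξ-x|²/D} = c₁ · (e^{-|·|²/(D-D₀)} ∗ P(∂) e^{-|·-x|²/D₀})(ξ)`. -/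
theorem stmt1 {n : ℕ} (P : MvPolynomial (Fin n) ℝ) (D D₀ : ℝ)
    (h0 : 0 < D₀) (hD : D₀ < D) (x ξ : EuclideanSpace ℝ (Fin n)) :
    applyDiff P (fun t => Real.exp (-‖t - x‖ ^ 2 / D)) ξ =
      (D / (Real.pi * D₀ * (D - D₀))) ^ ((n : ℝ) / 2) *
        ∫ t : EuclideanSpace ℝ (Fin n),
          Real.exp (-‖ξ - t‖ ^ 2 / (D - D₀)) *
            applyDiff P (fun s => Real.exp (-‖s - x‖ ^ 2 / D₀)) t := by
  classical
  have hA : 0 < D - D₀ := sub_pos.2 hD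
  set A := D - D₀ with hAdef
  set c1 := Real.sqrt (D / (π * A * D₀)) with hc1def
  have hkey : ∀ (m : ℕ) (y : ℝ),
      deriv^[m] (g1 D) y = c1 * ∫ t, g1 A t * deriv^[m] (g1 D₀) (y - t) := by
    intro m y
    have h := key1 A D₀ hA h0 m y
    rw [show A + D₀ = D by rw [hAdef]; ring] at h
    exact h
  have hG : ∀ (m : ℕ) (a b : ℝ),
      Integrable (fun s => deriv^[m] (g1 D₀) (s - a) * g1 A (s - b)) := by
    intro m a b
    obtain ⟨M, hM⟩ := bounded_iter_g1 D₀ h0 m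
    refine Integrable.bdd_mul (c := M) ((integrable_g1 hA).comp_sub_right b) ?_ ?_
    · exact ((continuous_iter_g1 D₀ m).comp
        (continuous_id.sub continuous_const)).aestronglyMeasurable
    · exact Filter.Eventually.of_forall fun s => by
        simpa [Real.norm_eq_abs] using hM (s - a)
  have hIeq : (fun t : EuclideanSpace ℝ (Fin n) =>
        Real.exp (-‖ξ - t‖ ^ 2 / A) * applyDiff P (fun s => Real.exp (-‖s - x‖ ^ 2 / D₀)) t)
      = fun t => ∑ α ∈ P.support, P.coeff α *
          ∏ j, (deriv^[α j] (g1 D₀) (t j - x j) * g1 A (t j - ξ j)) := by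
    funext t
    rw [applyDiff_gauss_eval, gauss_prod A (ξ - t), Finset.mul_sum]
    refine Finset.sum_congr rfl fun α _ => ?_
    have hC : (∏ j, g1 A ((ξ - t) j)) = ∏ j, g1 A (t j - ξ j) :=
      Finset.prod_congr rfl fun j _ => by
        rw [show (ξ - t) j = ξ j - t j by simp, g1_even]
    rw [hC, Finset.prod_mul_distrib]
    ring
  rw [hIeq]
  rw [integral_finset_sum _ (fun α _ =>
    ((integrable_euclid_prod _ (fun j => hG (α j) (x j) (ξ j))).const_mul _))]
  rw [applyDiff_gauss_eval, Finset.mul_sum]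
  refine Finset.sum_congr rfl fun α _ => ?_
  rw [MeasureTheory.integral_const_mul,
    integral_euclid_prod (fun j s => deriv^[α j] (g1 D₀) (s - x j) * g1 A (s - ξ j))]
  have hper : ∀ j : Fin n, c1 * ∫ s, deriv^[α j] (g1 D₀) (s - x j) * g1 A (s - ξ j)
      = deriv^[α j] (g1 D) (ξ j - x j) := by
    intro j
    have hsub : (∫ s, deriv^[α j] (g1 D₀) (s - x j) * g1 A (s - ξ j))
        = ∫ t, g1 A t * deriv^[α j] (g1 D₀) ((ξ j - x j) - t) := by
      rw [← MeasureTheory.integral_sub_left_eq_self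
        (fun s => deriv^[α j] (g1 D₀) (s - x j) * g1 A (s - ξ j)) volume (ξ j)]
      congr 1
      funext t
      have h1 : (ξ j - t) - x j = (ξ j - x j) - t := by ring
      have h2 : g1 A ((ξ j - t) - ξ j) = g1 A t := by
        rw [show (ξ j - t) - ξ j = 0 - t by ring, g1_even, sub_zero]
      rw [h1, h2, mul_comm]
    rw [hsub, ← hkey]
  have hCn : (D / (π * D₀ * A)) ^ ((n : ℝ) / 2) = c1 ^ n := by
    rw [hc1def, show D / (π * A * D₀) = D / (π * D₀ * A) by ring]
    rw [Real.sqrt_eq_rpow, ← Real.rpow_natCast ((D / (π * D₀ * A)) ^ ((1:ℝ)/2)) n,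
      ← Real.rpow_mul (div_nonneg (lt_trans h0 hD).le
        (mul_pos (mul_pos Real.pi_pos h0) hA).le)]
    congr 1
    ring
  rw [hCn]
  have hprod : (∏ j, deriv^[α j] (g1 D) (ξ j - x j))
      = c1 ^ n * ∏ j, ∫ s, deriv^[α j] (g1 D₀) (s - x j) * g1 A (s - ξ j) := by
    rw [show (∏ j, deriv^[α j] (g1 D) (ξ j - x j))
        = ∏ j, (c1 * ∫ s, deriv^[α j] (g1 D₀) (s - x j) * g1 A (s - ξ j)) from
      Finset.prod_congr rfl fun j _ => (hper j).symm]
    rw [Finset.prod_mul_distrib, Finset.prod_const, Finset.card_univ, Fintype.card_fin]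
  rw [hprod]
  ring
end

section
/- For all x ∈ ℝⁿ and D > 0, |1 - (πD)^{-n/2} Σ_{m ∈ ℤⁿ} e^{-|x - hm|²/(h²D)}| ≤ C₁ e^{-π²D}, where C₁ depends only on the dimension n (one may take C₁ = Σ_{k ∈ ℤⁿ \ {0}} e^{-π²D(|k|²-1)} bounded uniformly for D ≥ 1). -/
open Real
open scoped BigOperators

/-- The lattice point `m ∈ ℤⁿ` viewed as a vector in Euclidean space. -/
def latt {n : ℕ} (m : Fin n → ℤ) : EuclideanSpace ℝ (Fin n) := WithLp.toLp 2 (fun i => (m i : ℝ))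

lemma summable_exp_neg_int_sq {c : ℝ} (hc : 0 < c) :
    Summable (fun n : ℤ ↦ Real.exp (-c * (n : ℝ) ^ 2)) := by
  have hnat : Summable (fun n : ℕ ↦ Real.exp (-c * (n : ℝ) ^ 2)) := by
    refine Summable.of_nonneg_of_le (fun n ↦ (Real.exp_pos _).le) (fun n ↦ ?_)
      (summable_geometric_of_lt_one (Real.exp_pos (-c)).le
        (Real.exp_lt_one_iff.2 (by linarith)))
    rw [← Real.exp_nat_mul]
    apply Real.exp_le_exp.2
    have : (n : ℝ) ≤ (n : ℝ) ^ 2 := by exact_mod_cast Nat.le_self_pow two_ne_zero n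
    nlinarith
  apply Summable.of_nat_of_neg <;> simpa using hnat

lemma summable_gauss_shift {D : ℝ} (hD : 0 < D) (t : ℝ) :
    Summable (fun m : ℤ ↦ Real.exp (-(t - (m : ℝ)) ^ 2 / D)) := by
  refine Summable.of_nonneg_of_le (fun n ↦ (Real.exp_pos _).le) (fun m ↦ ?_)
    (((summable_exp_neg_int_sq (c := 1 / (2 * D)) (by positivity)).mul_left
      (Real.exp (t ^ 2 / D))))
  rw [← Real.exp_add]
  apply Real.exp_le_exp.2
  have h1 : ((m : ℝ)) ^ 2 ≤ 2 * (t - m) ^ 2 + 2 * t ^ 2 := by nlinarith [sq_nonneg ((m:ℝ) - 2*t)]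
  have h2 : (0:ℝ) < 2 * D := by linarith
  rw [← sub_nonneg]
  have h3 : t ^ 2 / D + -(1 / (2 * D)) * (m:ℝ) ^ 2 - -(t - (m:ℝ)) ^ 2 / D
      = (2 * t ^ 2 + 2 * (t - (m:ℝ)) ^ 2 - (m:ℝ) ^ 2) / (2 * D) := by
    field_simp
    ring
  rw [h3]
  exact div_nonneg (by linarith) h2.le

noncomputable def c1d : ℝ :=
  Real.exp (Real.pi ^ 2) * ∑' n : ℤ, Real.exp (-Real.pi ^ 2 * (n : ℝ) ^ 2)

lemma c1d_pos : 0 < c1d := by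
  have hs := summable_exp_neg_int_sq (c := Real.pi ^ 2) (by positivity)
  have h0 : (1:ℝ) ≤ ∑' n : ℤ, Real.exp (-Real.pi ^ 2 * (n : ℝ) ^ 2) := by
    have := Summable.le_tsum hs 0 (fun j _ ↦ (Real.exp_pos _).le)
    simpa using this
  have := Real.exp_pos (Real.pi ^ 2)
  unfold c1d; nlinarith

lemma one_dim {D : ℝ} (hD : 1 ≤ D) (t : ℝ) :
    |1 - (Real.pi * D) ^ (-(1:ℝ)/2) * ∑' m : ℤ, Real.exp (-(t - (m:ℝ)) ^ 2 / D)|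
      ≤ c1d * Real.exp (-Real.pi ^ 2 * D) := by
  have hD0 : (0:ℝ) < D := lt_of_lt_of_le one_pos hD
  have hπD : (0:ℝ) < Real.pi * D := by positivity
  set f : ℤ → ℂ := fun n ↦ Complex.exp
    (-(Real.pi:ℂ) * ((Real.pi * D : ℝ):ℂ) * (n:ℂ) ^ 2
      + 2 * (Real.pi:ℂ) * (Complex.I * (t:ℂ)) * (n:ℂ)) with hf
  have key := Complex.tsum_exp_neg_quadratic
    (a := ((Real.pi * D : ℝ):ℂ)) (by simpa using hπD) (Complex.I * (t:ℂ))
  -- rewrite RHS sum as real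
  have hterm : ∀ n : ℤ, Complex.exp
      (-(Real.pi:ℂ) / ((Real.pi * D : ℝ):ℂ) * ((n:ℂ) + Complex.I * (Complex.I * (t:ℂ))) ^ 2)
      = ((Real.exp (-(t - (n:ℝ)) ^ 2 / D) : ℝ) : ℂ) := by
    intro n
    rw [Complex.ofReal_exp]
    congr 1
    have hπ : (Real.pi:ℂ) ≠ 0 := Complex.ofReal_ne_zero.2 Real.pi_ne_zero
    have hDc : (D:ℂ) ≠ 0 := Complex.ofReal_ne_zero.2 hD0.ne'
    push_cast
    have hI : Complex.I * (Complex.I * (t:ℂ)) = -(t:ℂ) := by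
      rw [← mul_assoc, Complex.I_mul_I]; ring
    rw [hI]
    field_simp
    ring
  -- norms of f
  have hnorm : ∀ n : ℤ, ‖f n‖ = Real.exp (-Real.pi ^ 2 * D * (n:ℝ) ^ 2) := by
    intro n
    have : f n = ((Real.exp (-Real.pi ^ 2 * D * (n:ℝ) ^ 2) : ℝ) : ℂ)
        * Complex.exp ((2 * Real.pi * t * (n:ℝ) : ℝ) * Complex.I) := by
      simp only [hf]
      rw [Complex.ofReal_exp, ← Complex.exp_add]
      congr 1
      push_cast
      ring
    rw [this, norm_mul,
      Complex.norm_exp_ofReal_mul_I, mul_one, Complex.norm_real,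
      Real.norm_eq_abs, abs_of_pos (Real.exp_pos _)]
  have hsumnorm : Summable (fun n : ℤ ↦ ‖f n‖) := by
    refine Summable.congr (summable_exp_neg_int_sq (c := Real.pi ^ 2 * D) (by positivity)) ?_
    intro n; rw [hnorm n, neg_mul, neg_mul, neg_mul]
  have hsum : Summable f := Summable.of_norm hsumnorm
  rw [Summable.tsum_eq_add_tsum_ite hsum 0] at key
  have hf0 : f 0 = 1 := by simp [hf]
  rw [hf0] at key
  set R : ℂ := ∑' n : ℤ, ite (n = 0) 0 (f n) with hR
  -- rewrite the RHS of key
  rw [tsum_congr hterm, ← Complex.ofReal_tsum] at key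
  have hcpow : ((Real.pi * D : ℝ):ℂ) ^ (1/2 : ℂ) = (((Real.pi * D) ^ ((1:ℝ)/2) : ℝ) : ℂ) := by
    rw [Complex.ofReal_cpow hπD.le]
    norm_num
  rw [hcpow] at key
  set S : ℝ := ∑' m : ℤ, Real.exp (-(t - (m:ℝ)) ^ 2 / D) with hS
  have hrpow : (Real.pi * D) ^ (-(1:ℝ)/2) = ((Real.pi * D) ^ ((1:ℝ)/2))⁻¹ := by
    rw [← Real.rpow_neg hπD.le]; norm_num
  have hre : ((1 - (Real.pi * D) ^ (-(1:ℝ)/2) * S : ℝ) : ℂ) = -R := by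
    push_cast
    rw [hrpow]
    have : ((((Real.pi * D) ^ ((1:ℝ)/2))⁻¹ : ℝ) : ℂ) * (S:ℂ)
        = 1 / (((Real.pi * D) ^ ((1:ℝ)/2) : ℝ) : ℂ) * (S:ℂ) := by
      push_cast; ring
    rw [this, ← key]; ring
  have habs : |1 - (Real.pi * D) ^ (-(1:ℝ)/2) * S| = ‖R‖ := by
    rw [← Real.norm_eq_abs, ← Complex.norm_real, hre, norm_neg]
  rw [habs]
  -- bound ‖R‖
  have hsumite : Summable (fun n : ℤ ↦ ‖ite (n = 0) (0:ℂ) (f n)‖) := by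
    refine Summable.of_nonneg_of_le (fun n ↦ norm_nonneg _) (fun n ↦ ?_) hsumnorm
    by_cases h : n = 0 <;> simp [h]
  refine le_trans (norm_tsum_le_tsum_norm hsumite) ?_
  have hmaj : Summable (fun n : ℤ ↦ Real.exp (-Real.pi ^ 2 * D)
      * (Real.exp (Real.pi ^ 2) * Real.exp (-Real.pi ^ 2 * (n:ℝ) ^ 2))) :=
    ((summable_exp_neg_int_sq (by positivity)).mul_left _).mul_left _
  have hle : ∀ n : ℤ, ‖ite (n = 0) (0:ℂ) (f n)‖
      ≤ Real.exp (-Real.pi ^ 2 * D) * (Real.exp (Real.pi ^ 2)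
        * Real.exp (-Real.pi ^ 2 * (n:ℝ) ^ 2)) := by
    intro n
    by_cases h : n = 0
    · simp only [if_pos h, norm_zero]
      positivity
    · rw [if_neg h, hnorm n, ← Real.exp_add, ← Real.exp_add]
      apply Real.exp_le_exp.2
      have h1 : (1:ℝ) ≤ (n:ℝ) ^ 2 := by
        have h0 : (1:ℤ) ≤ n ^ 2 := by
          rcases lt_or_gt_of_ne h with h' | h' <;> nlinarith
        exact_mod_cast h0
      nlinarith [mul_nonneg (mul_nonneg (sq_nonneg Real.pi) (sub_nonneg.2 hD))
        (sub_nonneg.2 h1)]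
  refine le_trans (Summable.tsum_le_tsum hle hsumite hmaj) ?_
  rw [tsum_mul_left, tsum_mul_left]
  exact le_of_eq (by rw [c1d]; ring)

lemma summable_pi_prod : ∀ (n : ℕ) (g : Fin n → ℤ → ℝ), (∀ i m, 0 ≤ g i m) →
    (∀ i, Summable (g i)) → Summable (fun m : Fin n → ℤ ↦ ∏ i, g i (m i)) := by
  intro n
  induction n with
  | zero =>
    intro g _ _
    exact .of_finite
  | succ n ih =>
    intro g h0 hs
    rw [← (Fin.consEquiv (fun _ : Fin (n+1) => ℤ)).summable_iff]
    have he : ∀ p : ℤ × (Fin n → ℤ),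
        (∏ i, g i ((Fin.consEquiv (fun _ : Fin (n+1) => ℤ)) p i))
          = g 0 p.1 * ∏ i : Fin n, g i.succ (p.2 i) := by
      rintro ⟨a, b⟩
      rw [Fin.prod_univ_succ]
      simp [Fin.consEquiv]
    have h1 : Summable (fun p : ℤ × (Fin n → ℤ) ↦ g 0 p.1 * ∏ i : Fin n, g i.succ (p.2 i)) := by
      apply Summable.mul_of_nonneg (f := g 0)
        (g := fun b : Fin n → ℤ => ∏ i : Fin n, g i.succ (b i)) (hs 0)
      · exact ih (fun i => g i.succ) (fun i m => h0 _ _) (fun i => hs _)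
      · exact Pi.le_def.mpr (fun m => h0 0 m)
      · exact Pi.le_def.mpr (fun b => Finset.prod_nonneg (fun i _ => h0 _ _))
    exact h1.congr (fun p ↦ (he p).symm)

lemma tsum_pi_prod : ∀ (n : ℕ) (g : Fin n → ℤ → ℝ), (∀ i m, 0 ≤ g i m) →
    (∀ i, Summable (g i)) →
    ∑' m : Fin n → ℤ, ∏ i, g i (m i) = ∏ i, ∑' m : ℤ, g i m := by
  intro n
  induction n with
  | zero =>
    intro g _ _
    simp
  | succ n ih =>
    intro g h0 hs
    rw [← (Fin.consEquiv (fun _ : Fin (n+1) => ℤ)).tsum_eq]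
    have he : ∀ p : ℤ × (Fin n → ℤ),
        (∏ i, g i ((Fin.consEquiv (fun _ : Fin (n+1) => ℤ)) p i))
          = g 0 p.1 * ∏ i : Fin n, g i.succ (p.2 i) := by
      rintro ⟨a, b⟩
      rw [Fin.prod_univ_succ]
      simp [Fin.consEquiv]
    have hsum2 : Summable (fun b : Fin n → ℤ ↦ ∏ i : Fin n, g i.succ (b i)) :=
      summable_pi_prod n (fun i => g i.succ) (fun i m => h0 _ _) (fun i => hs _)
    calc ∑' p : ℤ × (Fin n → ℤ), ∏ i, g i ((Fin.consEquiv (fun _ : Fin (n+1) => ℤ)) p i)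
        = ∑' p : ℤ × (Fin n → ℤ), g 0 p.1 * ∏ i : Fin n, g i.succ (p.2 i) := tsum_congr he
      _ = ∑' a : ℤ, ∑' b : Fin n → ℤ, g 0 a * ∏ i : Fin n, g i.succ (b i) := by
          refine Summable.tsum_prod' (f := fun p : ℤ × (Fin n → ℤ) =>
            g 0 p.1 * ∏ i : Fin n, g i.succ (p.2 i)) ?_ (fun a => hsum2.mul_left (g 0 a))
          apply Summable.mul_of_nonneg (f := g 0)
            (g := fun b : Fin n → ℤ => ∏ i : Fin n, g i.succ (b i)) (hs 0)
          · exact hsum2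
          · exact Pi.le_def.mpr (fun m => h0 0 m)
          · exact Pi.le_def.mpr (fun b => Finset.prod_nonneg (fun i _ => h0 _ _))
      _ = ∑' a : ℤ, g 0 a * ∑' b : Fin n → ℤ, ∏ i : Fin n, g i.succ (b i) := by
          exact tsum_congr (fun a => tsum_mul_left)
      _ = (∑' a : ℤ, g 0 a) * ∑' b : Fin n → ℤ, ∏ i : Fin n, g i.succ (b i) := tsum_mul_right
      _ = ∏ i, ∑' m : ℤ, g i m := by
          rw [ih (fun i => g i.succ) (fun i m => h0 _ _) (fun i => hs _), Fin.prod_univ_succ]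

lemma prod_close {ι : Type*} (s : Finset ι) (P : ι → ℝ) {ε : ℝ} (hε : 0 ≤ ε)
    (h : ∀ i ∈ s, |1 - P i| ≤ ε) : |1 - ∏ i ∈ s, P i| ≤ (1 + ε) ^ s.card - 1 := by
  classical
  induction s using Finset.cons_induction with
  | empty => simp
  | cons a s ha ih =>
    rw [Finset.prod_cons, Finset.card_cons]
    have hQ := ih (fun i hi => h i (Finset.mem_cons.2 (Or.inr hi)))
    have hPa := h a (Finset.mem_cons.2 (Or.inl rfl))
    set Q := ∏ i ∈ s, P i
    have hQabs : |Q| ≤ 1 + ((1 + ε) ^ s.card - 1) := by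
      calc |Q| = |1 - (1 - Q)| := by ring_nf
        _ ≤ 1 + |1 - Q| := by
            have := abs_sub (1:ℝ) (1 - Q)
            calc |1 - (1 - Q)| ≤ |1| + |1 - Q| := abs_sub _ _
              _ = 1 + |1 - Q| := by rw [abs_one]
        _ ≤ 1 + ((1 + ε) ^ s.card - 1) := by linarith
    have key : |1 - P a * Q| ≤ |1 - Q| + |Q| * |1 - P a| := by
      have : 1 - P a * Q = (1 - Q) + Q * (1 - P a) := by ring
      rw [this]
      refine le_trans (abs_add_le _ _) ?_
      rw [abs_mul]
    have hpow : (0:ℝ) ≤ (1 + ε) ^ s.card := by positivity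
    calc |1 - P a * Q| ≤ |1 - Q| + |Q| * |1 - P a| := key
      _ ≤ ((1 + ε) ^ s.card - 1) + (1 + ((1 + ε) ^ s.card - 1)) * ε := by
          have h1 : |Q| * |1 - P a| ≤ (1 + ((1 + ε) ^ s.card - 1)) * ε :=
            mul_le_mul hQabs hPa (abs_nonneg _) (by linarith [abs_nonneg Q])
          linarith
      _ = (1 + ε) ^ (s.card + 1) - 1 := by ring
  
lemma pow_bound : ∀ (n : ℕ) {ε B : ℝ}, 0 ≤ ε → ε ≤ B →
    (1 + ε) ^ n - 1 ≤ n * (1 + B) ^ n * ε := by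
  intro n
  induction n with
  | zero => intro ε B h1 h2; simp
  | succ n ih =>
    intro ε B h1 h2
    have hB : 0 ≤ B := le_trans h1 h2
    have hIH := ih h1 h2
    have hpos : (0:ℝ) ≤ (1 + B) ^ n := by positivity
    have hexp : (1 + ε) ^ (n + 1) = ((1 + ε) ^ n - 1) * (1 + ε) + ε + 1 := by ring
    have step1 : ((1 + ε) ^ n - 1) * (1 + ε) ≤ (n * (1 + B) ^ n * ε) * (1 + B) := by
      apply mul_le_mul hIH (by linarith) (by linarith) ?_
      have h1A : (1:ℝ) ≤ (1 + ε) ^ n := one_le_pow₀ (by linarith)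
      positivity
    have h1B : (1:ℝ) ≤ (1 + B) ^ n * (1 + B) := by
      have := one_le_pow₀ (a := 1 + B) (by linarith : (1:ℝ) ≤ 1 + B) (n := n)
      nlinarith
    push_cast
    rw [hexp, pow_succ]
    nlinarith [mul_le_mul_of_nonneg_right h1B h1]

/-- Poisson-summation bound for the Gaussian lattice sum:
there exists `C₁` depending only on `n` such that for all `D ≥ 1`, `h > 0`, `x`,
`|1 - (πD)^{-n/2} Σ_{m ∈ ℤⁿ} e^{-|x-hm|²/(h²D)}| ≤ C₁ e^{-π²D}`. -/
theorem stmt2 (n : ℕ) :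
    ∃ C₁ : ℝ, 0 < C₁ ∧
      ∀ (D h : ℝ), 1 ≤ D → 0 < h → ∀ x : EuclideanSpace ℝ (Fin n),
        |1 - (Real.pi * D) ^ (-(n : ℝ) / 2) *
            ∑' m : Fin n → ℤ,
              Real.exp (-‖x - h • latt m‖ ^ 2 / (h ^ 2 * D))|
          ≤ C₁ * Real.exp (-Real.pi ^ 2 * D) := by
  have hc := c1d_pos
  refine ⟨n * (1 + c1d) ^ n * c1d + 1, by positivity, ?_⟩
  intro D h hD hh x
  have hD0 : (0:ℝ) < D := lt_of_lt_of_le one_pos hD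
  have hπD : (0:ℝ) < Real.pi * D := by positivity
  set t : Fin n → ℝ := fun i => x i / h with ht
  set g : Fin n → ℤ → ℝ := fun i m => Real.exp (-(t i - (m:ℝ)) ^ 2 / D) with hg
  -- Step A : pointwise factorization
  have stepA : ∀ m : Fin n → ℤ,
      Real.exp (-‖x - h • latt m‖ ^ 2 / (h ^ 2 * D)) = ∏ i, g i (m i) := by
    intro m
    have hn : ‖x - h • latt m‖ ^ 2 = ∑ i, (x i - h * (m i : ℝ)) ^ 2 := by
      rw [EuclideanSpace.norm_eq, Real.sq_sqrt (by positivity)]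
      refine Finset.sum_congr rfl (fun i _ => ?_)
      have : (x - h • latt m) i = x i - h * (m i : ℝ) := by
        simp [latt, PiLp.sub_apply, PiLp.smul_apply, smul_eq_mul]
      rw [this, Real.norm_eq_abs, sq_abs]
    have hterm : ∀ i : Fin n, (x i - h * (m i : ℝ)) ^ 2 / (h ^ 2 * D)
        = (t i - (m i : ℝ)) ^ 2 / D := by
      intro i
      rw [ht]
      field_simp
    simp only [hg]
    rw [← Real.exp_sum]
    congr 1
    rw [hn, neg_div, Finset.sum_div, ← Finset.sum_neg_distrib]
    refine Finset.sum_congr rfl (fun i _ => ?_)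
    rw [hterm i, neg_div]

  rw [tsum_congr stepA, tsum_pi_prod n g
    (fun i m => (Real.exp_pos _).le) (fun i => summable_gauss_shift hD0 (t i))]
  -- Step C : prefactor
  have hfac : (Real.pi * D) ^ (-(n:ℝ)/2) = ((Real.pi * D) ^ (-(1:ℝ)/2)) ^ n := by
    rw [← Real.rpow_natCast ((Real.pi * D) ^ (-(1:ℝ)/2)) n, ← Real.rpow_mul hπD.le]
    congr 1
    push_cast
    ring
  have hprod : ((Real.pi * D) ^ (-(1:ℝ)/2)) ^ n * ∏ i, ∑' mm : ℤ, g i mm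
      = ∏ i : Fin n, ((Real.pi * D) ^ (-(1:ℝ)/2) * ∑' mm : ℤ, g i mm) := by
    rw [Finset.prod_mul_distrib, Finset.prod_const, Finset.card_univ, Fintype.card_fin]
  rw [hfac, hprod]
  -- Step D : product estimate
  have hε : (0:ℝ) ≤ c1d * Real.exp (-Real.pi ^ 2 * D) := by positivity
  have hP : ∀ i ∈ Finset.univ (α := Fin n),
      |1 - (Real.pi * D) ^ (-(1:ℝ)/2) * ∑' mm : ℤ, g i mm| ≤ c1d * Real.exp (-Real.pi ^ 2 * D) :=
    fun i _ => one_dim hD (t i)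
  have hclose := prod_close Finset.univ
    (fun i : Fin n => (Real.pi * D) ^ (-(1:ℝ)/2) * ∑' mm : ℤ, g i mm) hε hP
  rw [Finset.card_univ, Fintype.card_fin] at hclose
  have hεB : c1d * Real.exp (-Real.pi ^ 2 * D) ≤ c1d := by
    have : Real.exp (-Real.pi ^ 2 * D) ≤ 1 := by
      rw [Real.exp_le_one_iff]
      nlinarith [Real.pi_pos]
    nlinarith
  have hpb := pow_bound n hε hεB
  have hexp1 : (0:ℝ) < Real.exp (-Real.pi ^ 2 * D) := Real.exp_pos _
  calc |1 - ∏ i, ((Real.pi * D) ^ (-(1:ℝ)/2) * ∑' mm : ℤ, g i mm)|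
      ≤ (1 + c1d * Real.exp (-Real.pi ^ 2 * D)) ^ n - 1 := hclose
    _ ≤ n * (1 + c1d) ^ n * (c1d * Real.exp (-Real.pi ^ 2 * D)) := hpb
    _ ≤ (n * (1 + c1d) ^ n * c1d + 1) * Real.exp (-Real.pi ^ 2 * D) := by nlinarith
end
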